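/- Let L be a positive definite moment functional on real polynomials in d variables, {ℙ_k} an orthonormal family with respect to L, and A_{n,i} = L(x_i ℙ_n ℙ_{n+1}ᵀ) the three-term coefficient matrices. Define the kernel K_n(x, y) = Σ_{k=0}^n ℙ_kᵀ(x) ℙ_k(y) = Σ_{k=0}^n Σ_{|α|=k} P_α^k(x) P_α^k(y). Then for every n ≥ 0, every 1 ≤ i ≤ d, and all x = (x_1, …, x_d), y = (y_1, …, y_d) ∈ ℝ^d, the Christoffel–Darboux identity holds: (x_i − y_i) K_n(x, y) = [A_{n,i} ℙ_{n+1}(x)]ᵀ ℙ_n(y) − ℙ_nᵀ(x) [A_{n,i} ℙ_{n+1}(y)]. -/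

import Mathlib

open MvPolynomial Matrix MeasureTheory

noncomputable section

/-- Real polynomials in `d` variables. -/
abbrev MPoly (d : ℕ) : Type := MvPolynomial (Fin d) ℝ

/-- Multi-indices `α ∈ ℕ^d` of total degree `n`; there are `r_n^d = binom (n+d-1) n` of them. -/
abbrev Idx (d n : ℕ) : Type := {α : Fin d → ℕ // ∑ i, α i = n}

instance (d n : ℕ) : Fintype (Idx d n) :=
  Fintype.subtype (Finset.Nat.antidiagonalTuple d n)
    (fun _ => Finset.Nat.mem_antidiagonalTuple)

/-- The monomial `x^α`. -/
def mono {d : ℕ} (α : Fin d → ℕ) : MPoly d :=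
  MvPolynomial.monomial (Finsupp.equivFunOnFinite.symm α) 1

/-- Multi-indices `α ∈ ℕ^d` of total degree at most `n`. -/
abbrev IdxLe (d n : ℕ) : Type := {α : Fin d → ℕ // ∑ i, α i ≤ n}

instance (d n : ℕ) : Fintype (IdxLe d n) :=
  Fintype.subtype ((Finset.range (n+1)).biUnion fun k => Finset.Nat.antidiagonalTuple d k)
    (fun α => by
      simp only [Finset.mem_biUnion, Finset.mem_range, Finset.Nat.mem_antidiagonalTuple,
        Nat.lt_succ_iff]
      exact ⟨fun ⟨k, hk, he⟩ => he ▸ hk, fun h => ⟨_, h, rfl⟩⟩)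

/-- `P` is a polynomial of total degree strictly less than `n` (the zero polynomial belongs
to every such class). -/
def IsDegLt {d : ℕ} (P : MPoly d) (n : ℕ) : Prop := P = 0 ∨ P.totalDegree < n

/-- The family `{P m α : |α| = m ≤ n}` spans `Π_n^d`, the polynomials of total degree at
most `n`, for every `n`. -/
def SpansPi {d : ℕ} (P : ∀ n, Idx d n → MPoly d) : Prop :=
  ∀ n, Submodule.span ℝ {p | ∃ m, m ≤ n ∧ ∃ α : Idx d m, p = P m α} =
    MvPolynomial.restrictTotalDegree (Fin d) ℝ n

variable {d : ℕ}

/-! Expanding `x_i P_kα` in the orthonormal family (only degrees `≤ k + 1` occur) writes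
`(x_i − y_i) K_n(x, y)` as `Σ_{k ≤ n} Σ_{m ≤ n + 1} W(k, m)` with
`W(k, m) = darbouxTerm k m = Σ_{α,β} L(x_i P_kα P_mβ) (P_mβ(x) P_kα(y) − P_kα(x) P_mβ(y))`.
Since `L(x_i P_kα P_mβ)` is symmetric, `W` is antisymmetric, so the block `k, m ≤ n` cancels;
in the column `m = n + 1` only `W(n, n + 1)` survives, because `P_{n+1}` is orthogonal to
`x_i P_kα` for `k < n`. -/

namespace SpansPi

variable {P : ∀ n, Idx d n → MPoly d}

theorem totalDegree_le (hspan : SpansPi P) (m : ℕ) (β : Idx d m) : (P m β).totalDegree ≤ m :=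
  (mem_restrictTotalDegree _ _ _).1 (hspan m ▸ Submodule.subset_span ⟨m, le_rfl, β, rfl⟩)

theorem totalDegree_X_mul_le (hspan : SpansPi P) (i : Fin d) (k : ℕ) (α : Idx d k) :
    (X i * P k α).totalDegree ≤ k + 1 :=
  (totalDegree_mul _ _).trans <| by
    rw [totalDegree_X, add_comm]
    exact Nat.succ_le_succ (hspan.totalDegree_le k α)

theorem map_eq_zero_of_totalDegree_le {M : Type*} [AddCommMonoid M] [Module ℝ M]
    (hspan : SpansPi P) (f : MPoly d →ₗ[ℝ] M) {N : ℕ}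
    (hf : ∀ m ≤ N, ∀ β : Idx d m, f (P m β) = 0) {p : MPoly d} (hp : p.totalDegree ≤ N) :
    f p = 0 := by
  have hmem : p ∈ Submodule.span ℝ {q | ∃ m, m ≤ N ∧ ∃ β : Idx d m, q = P m β} := by
    rw [hspan N]
    exact (mem_restrictTotalDegree _ _ _).2 hp
  refine (Submodule.span_le (p := LinearMap.ker f)).2 ?_ hmem
  rintro _ ⟨m, hm, β, rfl⟩
  exact hf m hm β

variable {L : MPoly d →ₗ[ℝ] ℝ}

theorem map_mul_eq_zero_of_totalDegree_lt (hspan : SpansPi P)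
    (hoff : ∀ n m : ℕ, n ≠ m → ∀ (α : Idx d n) (β : Idx d m), L (P n α * P m β) = 0)
    {k : ℕ} (α : Idx d k) {q : MPoly d} (hq : q.totalDegree < k) :
    L (P k α * q) = 0 :=
  hspan.map_eq_zero_of_totalDegree_le (L ∘ₗ LinearMap.mulLeft ℝ (P k α))
    (N := k - 1) (fun m hm β => hoff k m (by omega) α β) (by omega)

theorem eq_sum_smul (hspan : SpansPi P)
    (hon : ∀ n (α β : Idx d n), L (P n α * P n β) = if α = β then 1 else 0)
    (hoff : ∀ n m : ℕ, n ≠ m → ∀ (α : Idx d n) (β : Idx d m), L (P n α * P m β) = 0)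
    {N : ℕ} {p : MPoly d} (hp : p.totalDegree ≤ N) :
    p = ∑ m ∈ Finset.range (N + 1), ∑ β : Idx d m, L (p * P m β) • P m β := by
  let expand : MPoly d →ₗ[ℝ] MPoly d :=
    ∑ m ∈ Finset.range (N + 1), ∑ β : Idx d m,
      (L ∘ₗ LinearMap.mulRight ℝ (P m β)).smulRight (P m β)
  have hexpand : ∀ m' ≤ N, ∀ β' : Idx d m', expand (P m' β') = P m' β' := by
    intro m' hm' β'
    simp only [expand, LinearMap.sum_apply, LinearMap.smulRight_apply,
      LinearMap.comp_apply, LinearMap.mulRight_apply]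
    rw [Finset.sum_eq_single_of_mem m' (Finset.mem_range.2 (by omega))]
    · simp [hon, Finset.sum_ite_eq]
    · intro m _ hm
      exact Finset.sum_eq_zero fun β _ => by rw [hoff m' m (Ne.symm hm), zero_smul]
  have h := hspan.map_eq_zero_of_totalDegree_le (LinearMap.id - expand)
    (fun m hm β => sub_eq_zero.2 (hexpand m hm β).symm) hp
  simpa [expand, sub_eq_zero] using h

end SpansPi

theorem Finset.sum_sum_eq_zero_of_antisymm {ι R : Type*} [NonAssocRing R] [NoZeroDivisors R]
    [CharZero R] (s : Finset ι) (f : ι → ι → R) (hf : ∀ a b, f b a = -f a b) :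
    ∑ a ∈ s, ∑ b ∈ s, f a b = 0 := by
  refine CharZero.eq_neg_self_iff.1 ?_
  calc ∑ a ∈ s, ∑ b ∈ s, f a b = ∑ b ∈ s, ∑ a ∈ s, -f b a :=
        Finset.sum_comm.trans <|
          Finset.sum_congr rfl fun b _ => Finset.sum_congr rfl fun a _ => hf b a
    _ = -∑ a ∈ s, ∑ b ∈ s, f a b := by simp only [Finset.sum_neg_distrib]

variable (L : MPoly d →ₗ[ℝ] ℝ) (P : ∀ n, Idx d n → MPoly d) (i : Fin d)
  (x y : Fin d → ℝ)

def darbouxTerm (k m : ℕ) : ℝ :=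
  ∑ α : Idx d k, ∑ β : Idx d m, L (X i * P k α * P m β) *
    (eval x (P m β) * eval y (P k α) - eval x (P k α) * eval y (P m β))

theorem darbouxTerm_swap (k m : ℕ) :
    darbouxTerm L P i x y m k = -darbouxTerm L P i x y k m := by
  rw [darbouxTerm, darbouxTerm, Finset.sum_comm, ← Finset.sum_neg_distrib]
  refine Finset.sum_congr rfl fun α _ => ?_
  rw [← Finset.sum_neg_distrib]
  refine Finset.sum_congr rfl fun β _ => ?_
  rw [mul_right_comm (X i)]
  ring

theorem darbouxTerm_eq_zero_of_succ_lt (hspan : SpansPi P)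
    (hoff : ∀ n m : ℕ, n ≠ m → ∀ (α : Idx d n) (β : Idx d m), L (P n α * P m β) = 0)
    {k m : ℕ} (hkm : k + 1 < m) : darbouxTerm L P i x y k m = 0 := by
  refine Finset.sum_eq_zero fun α _ => Finset.sum_eq_zero fun β _ => ?_
  have hdeg : (X i * P k α).totalDegree < m := (hspan.totalDegree_X_mul_le i k α).trans_lt hkm
  rw [mul_comm (X i * P k α), hspan.map_mul_eq_zero_of_totalDegree_lt hoff β hdeg, zero_mul]

theorem sub_mul_sum_eval_mul_eval_eq_sum_darbouxTerm (hspan : SpansPi P)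
    (hon : ∀ n (α β : Idx d n), L (P n α * P n β) = if α = β then 1 else 0)
    (hoff : ∀ n m : ℕ, n ≠ m → ∀ (α : Idx d n) (β : Idx d m), L (P n α * P m β) = 0)
    {k N : ℕ} (hkN : k + 1 ≤ N) :
    (x i - y i) * ∑ α : Idx d k, eval x (P k α) * eval y (P k α) =
      ∑ m ∈ Finset.range (N + 1), darbouxTerm L P i x y k m := by
  have hexpand : ∀ (z : Fin d → ℝ) (α : Idx d k), z i * eval z (P k α) =
      ∑ m ∈ Finset.range (N + 1), ∑ β : Idx d m,
        L (X i * P k α * P m β) * eval z (P m β) := by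
    intro z α
    have hdeg : (X i * P k α).totalDegree ≤ N := (hspan.totalDegree_X_mul_le i k α).trans hkN
    conv_lhs => rw [← eval_X (f := z) i, ← eval_mul, hspan.eq_sum_smul hon hoff hdeg]
    simp only [map_sum, smul_eval]
  simp only [darbouxTerm, Finset.mul_sum]
  rw [Finset.sum_comm]
  refine Finset.sum_congr rfl fun α _ => ?_
  simp only [mul_sub, Finset.sum_sub_distrib]
  rw [show (x i - y i) * (eval x (P k α) * eval y (P k α)) =
      x i * eval x (P k α) * eval y (P k α) - eval x (P k α) * (y i * eval y (P k α)) by ring,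
    hexpand x α, hexpand y α]
  simp only [Finset.sum_mul, Finset.mul_sum]
  congr 1 <;> exact Finset.sum_congr rfl fun m _ => Finset.sum_congr rfl fun β _ => by ring

theorem christoffel_darboux_formula_general
    (L : MPoly d →ₗ[ℝ] ℝ)
    (P : ∀ n, Idx d n → MPoly d)
    (hspan : SpansPi P)
    (hon : ∀ n (α β : Idx d n), L (P n α * P n β) = if α = β then 1 else 0)
    (hoff : ∀ n m : ℕ, n ≠ m → ∀ (α : Idx d n) (β : Idx d m), L (P n α * P m β) = 0)
    (n : ℕ) (i : Fin d) (x y : Fin d → ℝ) :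
    (x i - y i) *
        (∑ k ∈ Finset.range (n+1), ∑ α : Idx d k, eval x (P k α) * eval y (P k α)) =
      (∑ α : Idx d n,
        (∑ β : Idx d (n+1), L (X i * P n α * P (n+1) β) * eval x (P (n+1) β)) *
          eval y (P n α)) -
      (∑ α : Idx d n,
        eval x (P n α) *
          ∑ β : Idx d (n+1), L (X i * P n α * P (n+1) β) * eval y (P (n+1) β)) := by
  set W := darbouxTerm L P i x y
  calc _ = ∑ k ∈ Finset.range (n + 1), ∑ m ∈ Finset.range (n + 1 + 1), W k m := by
        rw [Finset.mul_sum]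
        exact Finset.sum_congr rfl fun k hk =>
          sub_mul_sum_eval_mul_eval_eq_sum_darbouxTerm L P i x y hspan hon hoff
            (Finset.mem_range.1 hk)
    _ = ∑ k ∈ Finset.range (n + 1), ∑ m ∈ Finset.range (n + 1), W k m +
          ∑ k ∈ Finset.range (n + 1), W k (n + 1) := by
        simp only [Finset.sum_range_succ _ (n + 1), Finset.sum_add_distrib]
    _ = W n (n + 1) := by
        rw [Finset.sum_sum_eq_zero_of_antisymm _ W (darbouxTerm_swap L P i x y), zero_add,
          Finset.sum_range_succ, Finset.sum_eq_zero fun k hk =>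
            darbouxTerm_eq_zero_of_succ_lt L P i x y hspan hoff
              (by rw [Finset.mem_range] at hk; omega), zero_add]
    _ = _ := by
        simp only [W, darbouxTerm, mul_sub, Finset.sum_sub_distrib, Finset.sum_mul,
          Finset.mul_sum]
        congr 1 <;> exact Finset.sum_congr rfl fun α _ => Finset.sum_congr rfl fun β _ => by ring

/-- The Christoffel–Darboux formula:
`(x_i − y_i) K_n(x,y) = [A_{n,i} ℙ_{n+1}(x)]ᵀ ℙ_n(y) − ℙ_nᵀ(x) [A_{n,i} ℙ_{n+1}(y)]`,
where `K_n(x,y) = Σ_{k≤n} ℙ_kᵀ(x) ℙ_k(y)` and `A_{n,i} = L(x_i ℙ_n ℙ_{n+1}ᵀ)`. -/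
theorem christoffel_darboux_formula
    (L : MPoly d →ₗ[ℝ] ℝ)
    (hL : ∀ p : MPoly d, p ≠ 0 → 0 < L (p * p))
    (P : ∀ n, Idx d n → MPoly d)
    (hdeg : ∀ n (α : Idx d n), (P n α).totalDegree = n)
    (hspan : SpansPi P)
    (hon : ∀ n (α β : Idx d n), L (P n α * P n β) = if α = β then 1 else 0)
    (hoff : ∀ n m : ℕ, n ≠ m → ∀ (α : Idx d n) (β : Idx d m), L (P n α * P m β) = 0)
    (n : ℕ) (i : Fin d) (x y : Fin d → ℝ) :
    (x i - y i) *
        (∑ k ∈ Finset.range (n+1), ∑ α : Idx d k, eval x (P k α) * eval y (P k α)) =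
      (∑ α : Idx d n,
        (∑ β : Idx d (n+1), L (X i * P n α * P (n+1) β) * eval x (P (n+1) β)) *
          eval y (P n α)) -
      (∑ α : Idx d n,
        eval x (P n α) *
          ∑ β : Idx d (n+1), L (X i * P n α * P (n+1) β) * eval y (P (n+1) β)) :=
  christoffel_darboux_formula_general L P hspan hon hoff n i x y
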